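/- arXiv:1902.06649 — 6 statements merged into one kernel-verified Lean document; each statement's English description precedes it below -/
import Mathlib

section
/- (Andreief identity.) Let (X, μ) be a σ-finite measure space and let f_1, …, f_N and g_1, …, g_N be complex-valued functions in L²(μ). Then det( ∫_X f_j(x) g_k(x) dμ(x) )_{j,k=1}^{N} = (1/N!) ∫_{X^N} det( f_j(x_k) )_{j,k=1}^{N} · det( g_j(x_k) )_{j,k=1}^{N} dμ(x_1)⋯dμ(x_N). -/
/-!
Expanding both determinants by the Leibniz formula writes the integrand as a signed double sum
over pairs of permutations `(σ, τ)` of products `∏ₖ f_{σ k}(x_k) g_{τ k}(x_k)`. By Fubini each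
such product integrates to `∏ₖ A_{σ k, τ k}`, where `A_{jk} = ∫ f_j g_k dμ`. For fixed `σ` the
sum over `τ` is the determinant of `A` with its rows permuted by `σ`, i.e. `sign σ · det A`; since
`sign σ ^ 2 = 1`, every `σ` contributes `det A`, and the integral is `N! · det A`.
-/

open MeasureTheory Equiv

namespace Matrix

variable {n R : Type*} [Fintype n] [DecidableEq n] [CommRing R]

theorem sum_sign_mul_prod_perm_apply_eq_sign_mul_det (σ : Perm n) (A : Matrix n n R) :
    ∑ τ : Perm n, (Perm.sign τ : R) * ∏ k, A (σ k) (τ k) = Perm.sign σ * A.det := by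
  rw [← det_permute, ← det_transpose, det_apply']
  rfl

theorem sum_sign_mul_sign_mul_prod_apply (A : Matrix n n R) :
    ∑ σ : Perm n, ∑ τ : Perm n, (Perm.sign σ : R) * Perm.sign τ * ∏ k, A (σ k) (τ k) =
      (Fintype.card n).factorial * A.det := by
  have sign_mul_self (σ : Perm n) : (Perm.sign σ : R) * Perm.sign σ = 1 := by
    rw [← Int.cast_mul, ← Units.val_mul, Int.units_mul_self, Units.val_one, Int.cast_one]
  simp_rw [mul_assoc, ← Finset.mul_sum, sum_sign_mul_prod_perm_apply_eq_sign_mul_det, ← mul_assoc,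
    sign_mul_self, one_mul, Finset.sum_const, Finset.card_univ, Fintype.card_perm, nsmul_eq_mul]

theorem det_mul_det_eq_sum_sum (M M' : Matrix n n R) :
    M.det * M'.det =
      ∑ σ : Perm n, ∑ τ : Perm n,
        (Perm.sign σ : R) * Perm.sign τ * ∏ k, M (σ k) k * M' (τ k) k := by
  simp_rw [det_apply', Finset.sum_mul_sum, Finset.prod_mul_distrib]
  refine Finset.sum_congr rfl fun σ _ => Finset.sum_congr rfl fun τ _ => ?_
  ring

end Matrix

theorem MeasureTheory.integral_det_mul_det {𝕜 X ι : Type*} [RCLike 𝕜] [MeasurableSpace X]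
    (μ : Measure X) [SigmaFinite μ] [Fintype ι] [DecidableEq ι] (f g : ι → X → 𝕜)
    (hfg : ∀ j k, Integrable (fun x => f j x * g k x) μ) :
    ∫ x : ι → X, (Matrix.of fun j k => f j (x k)).det * (Matrix.of fun j k => g j (x k)).det
        ∂(Measure.pi fun _ => μ) =
      (Fintype.card ι).factorial * (Matrix.of fun j k => ∫ x, f j x * g k x ∂μ).det := by
  have integrable_prod (σ τ : Perm ι) :
      Integrable (fun x : ι → X => ∏ k, f (σ k) (x k) * g (τ k) (x k))
        (Measure.pi fun _ => μ) :=
    Integrable.fintype_prod fun k => hfg (σ k) (τ k)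
  simp_rw [Matrix.det_mul_det_eq_sum_sum, Matrix.of_apply]
  rw [integral_finsetSum _ fun σ _ =>
    integrable_finsetSum _ fun τ _ => (integrable_prod σ τ).const_mul _]
  simp_rw [integral_finsetSum _ fun τ _ => (integrable_prod _ τ).const_mul _, integral_const_mul]
  rw [← Matrix.sum_sign_mul_sign_mul_prod_apply]
  refine Finset.sum_congr rfl fun σ _ => Finset.sum_congr rfl fun τ _ => ?_
  rw [integral_fintype_prod_eq_prod fun k x => f (σ k) x * g (τ k) x]
  rfl

/-- Andreief identity: the determinant of a Gram-type matrix of pairwise integrals equals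
`1/N!` times the integral over `X^N` of the product of the two determinants
`det(f_j(x_k))` and `det(g_j(x_k))`. -/
theorem andreief_identity
    {X : Type*} [MeasurableSpace X] (μ : Measure X) [SigmaFinite μ]
    (N : ℕ) (f g : Fin N → X → ℂ)
    (hf : ∀ j, MemLp (f j) 2 μ) (hg : ∀ j, MemLp (g j) 2 μ) :
    Matrix.det (Matrix.of fun j k : Fin N => ∫ x, f j x * g k x ∂μ) =
      (1 / (N.factorial : ℂ)) *
        ∫ x : Fin N → X,
          Matrix.det (Matrix.of fun j k : Fin N => f j (x k)) *
            Matrix.det (Matrix.of fun j k : Fin N => g j (x k))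
          ∂(Measure.pi fun _ => μ) := by
  rw [integral_det_mul_det μ f g fun j k => (hf j).integrable_mul (hg k), Fintype.card_fin,
    one_div, inv_mul_cancel_left₀ (Nat.cast_ne_zero.mpr N.factorial_ne_zero)]
end

section
/- (Toeplitz minors as matrix integrals with Schur insertions, bialternant form.) Let f : ℝ → ℂ be a bounded 2π-periodic measurable function with Fourier coefficients d_m = (1/2π) ∫_{-π}^{π} f(φ) e^{-imφ} dφ. Let λ = (λ_1 ≥ λ_2 ≥ … ≥ λ_N ≥ 0) and μ = (μ_1 ≥ μ_2 ≥ … ≥ μ_N ≥ 0) be partitions with at most N parts. Then det( d_{(j−λ_j)−(k−μ_k)} )_{j,k=1}^{N} = (1/N!) ∫_{[-π,π]^N} det( e^{i(λ_l+N−l)φ_j} )_{j,l=1}^{N} · det( e^{-i(μ_l+N−l)φ_j} )_{j,l=1}^{N} ∏_{j=1}^{N} f(φ_j) (dφ_j/2π). -/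
/-!
By the Andréief (Cauchy–Binet) identity, for any functions `a_l, b_l` on a measure space
`∫ det(a_l(x_j)) det(b_l(x_j)) dx_1 ⋯ dx_N = N! det(∫ a_p b_q)`: expand both determinants over
permutations, integrate each product coordinatewise by Fubini, and resum, the sum over one
permutation giving a signed copy of the Gram determinant. With `a_l(φ) = e^{i(λ_l+N-1-l)φ}` and
`b_l(φ) = e^{-i(μ_l+N-1-l)φ} f(φ)/2π`, the Gram entries are exactly the Fourier coefficients
`d_{(p-λ_p)-(q-μ_q)}` of `f`.
-/

open MeasureTheory Matrix Equiv Finset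

namespace Matrix

variable {n R : Type*} [Fintype n] [DecidableEq n] [CommRing R]

theorem det_eq_sum_sign_mul_prod_apply_perm (M : Matrix n n R) :
    M.det = ∑ σ : Perm n, ((Perm.sign σ : ℤ) : R) * ∏ i, M i (σ i) := by
  rw [← det_transpose, det_apply']
  rfl

theorem sum_sign_mul_prod_apply_perm_eq_sign_mul_det (σ : Perm n) (M : Matrix n n R) :
    ∑ τ : Perm n, ((Perm.sign τ : ℤ) : R) * ∏ i, M (σ i) (τ i) =
      ((Perm.sign σ : ℤ) : R) * M.det := by
  rw [← det_permute, det_eq_sum_sign_mul_prod_apply_perm]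
  rfl

end Matrix

section Andreief

variable {ι α 𝕜 : Type*} [Fintype ι] [DecidableEq ι] [RCLike 𝕜] [MeasurableSpace α]
  {ν : Measure α} [SigmaFinite ν]

theorem integral_det_mul_det_eq_factorial_mul_det (a b : ι → α → 𝕜)
    (hab : ∀ p q, Integrable (fun y => a p y * b q y) ν) :
    ∫ x, (of fun j l => a l (x j)).det * (of fun j l => b l (x j)).det ∂(Measure.pi fun _ => ν) =
      ((Fintype.card ι).factorial : 𝕜) * (of fun p q => ∫ y, a p y * b q y ∂ν).det := by
  set G : Matrix ι ι 𝕜 := of fun p q => ∫ y, a p y * b q y ∂ν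
  set sgn : Perm ι → 𝕜 := fun σ => ((Perm.sign σ : ℤ) : 𝕜)
  have hexpand : ∀ x : ι → α,
      (of fun j l => a l (x j)).det * (of fun j l => b l (x j)).det =
        ∑ σ : Perm ι, ∑ τ : Perm ι, sgn σ * (sgn τ * ∏ j, (a (σ j) (x j) * b (τ j) (x j))) := by
    intro x
    simp only [det_eq_sum_sign_mul_prod_apply_perm, of_apply, sum_mul_sum, prod_mul_distrib]
    exact sum_congr rfl fun σ _ => sum_congr rfl fun τ _ => by ring
  have hint : ∀ σ τ : Perm ι, Integrable
      (fun x : ι → α => sgn σ * (sgn τ * ∏ j, (a (σ j) (x j) * b (τ j) (x j))))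
      (Measure.pi fun _ => ν) := fun σ τ =>
    ((Integrable.fintype_prod fun j => hab (σ j) (τ j)).const_mul _).const_mul _
  calc _ = ∑ σ : Perm ι, ∑ τ : Perm ι, sgn σ * (sgn τ * ∏ j, G (σ j) (τ j)) := by
        simp_rw [hexpand]
        rw [integral_finsetSum _ fun σ _ => integrable_finsetSum _ fun τ _ => hint σ τ]
        refine sum_congr rfl fun σ _ => ?_
        rw [integral_finsetSum _ fun τ _ => hint σ τ]
        refine sum_congr rfl fun τ _ => ?_
        rw [integral_const_mul, integral_const_mul,
          integral_fintype_prod_eq_prod (fun j y => a (σ j) y * b (τ j) y)]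
        rfl
    _ = ∑ _σ : Perm ι, G.det := by
        refine sum_congr rfl fun σ _ => ?_
        rw [← mul_sum, sum_sign_mul_prod_apply_perm_eq_sign_mul_det, ← mul_assoc, ← Int.cast_mul,
          ← Units.val_mul, Int.units_mul_self, Units.val_one, Int.cast_one, one_mul]
    _ = _ := by simp [Fintype.card_perm]

end Andreief

theorem Complex.integrable_mul_exp_neg_I_mul {μ : Measure ℝ} [IsFiniteMeasure μ] {f : ℝ → ℂ}
    (hf : Measurable f) {C : ℝ} (hC : ∀ x, ‖f x‖ ≤ C) (m : ℤ) :
    Integrable (fun x : ℝ => f x * Complex.exp (-Complex.I * m * x)) μ := by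
  refine Integrable.of_bound (by fun_prop) C (ae_of_all _ fun x => ?_)
  simpa [Complex.norm_exp] using hC x

open Complex

theorem toeplitz_minor_matrix_integral_general
    (f : ℝ → ℂ)
    (hmeas : Measurable f) (C : ℝ) (hbdd : ∀ x, ‖f x‖ ≤ C)
    (N : ℕ) (lam mu : Fin N → ℕ) :
    Matrix.det (Matrix.of fun j k : Fin N =>
        (1 / (2 * (Real.pi : ℂ))) * ∫ φ in (-Real.pi)..Real.pi,
          f φ * Complex.exp (-Complex.I *
            ((((j : ℤ) - (lam j : ℤ)) - ((k : ℤ) - (mu k : ℤ))) : ℤ) * φ)) =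
      (1 / (N.factorial : ℂ)) *
        ∫ φ : Fin N → ℝ in Set.univ.pi (fun _ => Set.Icc (-Real.pi) Real.pi),
          (Matrix.det (Matrix.of fun j l : Fin N =>
              Complex.exp (Complex.I * ((lam l : ℂ) + N - 1 - (l : ℕ)) * φ j)) *
            Matrix.det (Matrix.of fun j l : Fin N =>
              Complex.exp (-Complex.I * ((mu l : ℂ) + N - 1 - (l : ℕ)) * φ j)) *
            ∏ j : Fin N, (f (φ j) * (1 / (2 * (Real.pi : ℂ))))) := by
  set c : ℂ := 1 / (2 * (Real.pi : ℂ))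
  set a : Fin N → ℝ → ℂ := fun l x => exp (I * ((lam l : ℂ) + N - 1 - (l : ℕ)) * x)
  set b : Fin N → ℝ → ℂ := fun l x => exp (-I * ((mu l : ℂ) + N - 1 - (l : ℕ)) * x) * (f x * c)
  -- the bialternant exponents telescope to the Toeplitz index `(p - λ_p) - (q - μ_q)`
  have hab : ∀ p q x, a p x * b q x =
      c * (f x * exp (-I * ((((p : ℤ) - (lam p : ℤ)) - ((q : ℤ) - (mu q : ℤ))) : ℤ) * x)) := by
    intro p q x
    simp only [a, b, ← mul_assoc, ← exp_add]
    push_cast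
    ring_nf
  have hweight : ∀ φ : Fin N → ℝ,
      (of fun j l => exp (I * ((lam l : ℂ) + N - 1 - (l : ℕ)) * φ j)).det *
        (of fun j l => exp (-I * ((mu l : ℂ) + N - 1 - (l : ℕ)) * φ j)).det *
        ∏ j, (f (φ j) * c) = (of fun j l => a l (φ j)).det * (of fun j l => b l (φ j)).det := by
    intro φ
    have hcol := det_mul_column (fun j => f (φ j) * c)
      (of fun j l => exp (-I * ((mu l : ℂ) + N - 1 - (l : ℕ)) * φ j))
    simp only [of_apply] at hcol
    simp only [a, b, mul_comm (exp _), hcol]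
    ring
  have hint : ∀ p q, Integrable (fun x => a p x * b q x)
      (volume.restrict (Set.Icc (-Real.pi) Real.pi)) := fun p q => by
    simp_rw [hab]
    exact (integrable_mul_exp_neg_I_mul hmeas hbdd _).const_mul c
  simp_rw [hweight, volume_pi, Measure.restrict_pi_pi,
    integral_det_mul_det_eq_factorial_mul_det a b hint, Fintype.card_fin, ← mul_assoc]
  rw [one_div_mul_cancel (Nat.cast_ne_zero.mpr N.factorial_ne_zero), one_mul]
  congr 1
  ext p q
  simp_rw [of_apply, hab, integral_const_mul, intervalIntegral.integral_of_le
    (neg_le_self Real.pi_pos.le), integral_Icc_eq_integral_Ioc]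

/-- Toeplitz minors as matrix integrals with Schur-polynomial (bialternant) insertions:
the minor `D_N^{λ,μ}(f) = det(d_{(j-λ_j)-(k-μ_k)})` of the Toeplitz matrix of a bounded
2π-periodic symbol `f` equals `1/N!` times the integral over `[-π,π]^N` of the product of the
two bialternants `det(e^{i(λ_l+N-1-l)φ_j})`, `det(e^{-i(μ_l+N-1-l)φ_j})` (0-based indexing)
against `∏ f(φ_j) dφ_j/2π`. -/
theorem toeplitz_minor_matrix_integral
    (f : ℝ → ℂ) (hper : Function.Periodic f (2 * Real.pi))
    (hmeas : Measurable f) (C : ℝ) (hbdd : ∀ x, ‖f x‖ ≤ C)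
    (N : ℕ) (lam mu : Fin N → ℕ) (hlam : Antitone lam) (hmu : Antitone mu) :
    Matrix.det (Matrix.of fun j k : Fin N =>
        (1 / (2 * (Real.pi : ℂ))) * ∫ φ in (-Real.pi)..Real.pi,
          f φ * Complex.exp (-Complex.I *
            ((((j : ℤ) - (lam j : ℤ)) - ((k : ℤ) - (mu k : ℤ))) : ℤ) * φ)) =
      (1 / (N.factorial : ℂ)) *
        ∫ φ : Fin N → ℝ in Set.univ.pi (fun _ => Set.Icc (-Real.pi) Real.pi),
          (Matrix.det (Matrix.of fun j l : Fin N =>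
              Complex.exp (Complex.I * ((lam l : ℂ) + N - 1 - (l : ℕ)) * φ j)) *
            Matrix.det (Matrix.of fun j l : Fin N =>
              Complex.exp (-Complex.I * ((mu l : ℂ) + N - 1 - (l : ℕ)) * φ j)) *
            ∏ j : Fin N, (f (φ j) * (1 / (2 * (Real.pi : ℂ))))) :=
  toeplitz_minor_matrix_integral_general f hmeas C hbdd N lam mu
end

section
/- For every integer n ≥ 1 and every φ ∈ ℝ, the principal-value Fourier integrals of the cotangent kernel satisfy: lim_{ε→0⁺} ∫_{{θ : ε ≤ |φ−θ| ≤ π}} cot((φ−θ)/2) cos(nθ) dθ = 2π sin(nφ), and lim_{ε→0⁺} ∫_{{θ : ε ≤ |φ−θ| ≤ π}} cot((φ−θ)/2) sin(nθ) dθ = −2π cos(nφ). -/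
open MeasureTheory Filter

lemma term_id (u : ℝ) (k : ℕ) :
    Real.sin (u/2) * (Real.cos (k*u) + Real.cos ((k+1)*u))
      = Real.cos (u/2) * (Real.sin ((k+1)*u) - Real.sin (k*u)) := by
  have h1 : Real.sin u = 2 * Real.sin (u/2) * Real.cos (u/2) := by
    have h := Real.sin_two_mul (u/2); rw [show 2*(u/2) = u by ring] at h; linarith
  have h2 : Real.cos u = 1 - 2 * Real.sin (u/2)^2 := by
    have h := Real.cos_two_mul' (u/2); rw [show 2*(u/2) = u by ring] at h
    have h3 := Real.sin_sq_add_cos_sq (u/2); linarith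
  have h3 : Real.sin (u/2)^2 + Real.cos (u/2)^2 = 1 := Real.sin_sq_add_cos_sq _
  have e1 : ((k:ℝ)+1)*u = k*u + u := by ring
  rw [e1, Real.cos_add, Real.sin_add, h1, h2]
  linear_combination (-2*Real.cos (k*u)*Real.sin (u/2)) * h3

lemma sum_id (n : ℕ) (u : ℝ) :
    Real.sin (u/2) * ∑ k ∈ Finset.range n, (Real.cos (k*u) + Real.cos ((k+1)*u))
      = Real.cos (u/2) * Real.sin (n*u) := by
  rw [Finset.mul_sum]
  have h : ∀ k ∈ Finset.range n, Real.sin (u/2) * (Real.cos (k*u) + Real.cos ((k+1)*u))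
      = (fun k : ℕ => Real.cos (u/2) * Real.sin (k*u)) (k+1)
        - (fun k : ℕ => Real.cos (u/2) * Real.sin (k*u)) k := by
    intro k _
    simp only [term_id u k, Nat.cast_add, Nat.cast_one]
    ring
  rw [Finset.sum_congr rfl h, Finset.sum_range_sub (fun k : ℕ => Real.cos (u/2) * Real.sin (k*u)) n]
  simp

lemma int_cos_nat (k : ℕ) :
    ∫ u in (0:ℝ)..Real.pi, Real.cos (k*u) = if k = 0 then Real.pi else 0 := by
  rcases Nat.eq_zero_or_pos k with hk | hk
  · subst hk; simp
  · have hk' : (k:ℝ) ≠ 0 := Nat.cast_ne_zero.mpr hk.ne'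
    rw [intervalIntegral.integral_comp_mul_left (fun x => Real.cos x) hk']
    simp [Real.sin_nat_mul_pi, hk.ne']

lemma int_P (n : ℕ) (hn : 1 ≤ n) :
    ∫ u in (0:ℝ)..Real.pi,
      (∑ k ∈ Finset.range n, (Real.cos (k*u) + Real.cos ((k+1)*u))) = Real.pi := by
  rw [intervalIntegral.integral_finset_sum]
  · have : ∀ k ∈ Finset.range n,
        (∫ u in (0:ℝ)..Real.pi, (Real.cos (k*u) + Real.cos ((k+1)*u)))
          = if k = 0 then Real.pi else 0 := by
      intro k _
      rw [intervalIntegral.integral_add (by apply Continuous.intervalIntegrable; fun_prop)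
            (by apply Continuous.intervalIntegrable; fun_prop)]
      have h1 := int_cos_nat k
      have h2 := int_cos_nat (k+1)
      push_cast at h1 h2 ⊢
      rw [h1, h2]
      simp
    rw [Finset.sum_congr rfl this, Finset.sum_ite_eq' (Finset.range n) 0 (fun _ => Real.pi), if_pos (Finset.mem_range.mpr hn)]
  · intro k _
    apply Continuous.intervalIntegrable; fun_prop

noncomputable def Pker (n : ℕ) (u : ℝ) : ℝ :=
  ∑ k ∈ Finset.range n, (Real.cos (k*u) + Real.cos ((k+1)*u))

lemma Pker_cont (n : ℕ) : Continuous (Pker n) := by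
  unfold Pker; fun_prop

-- step (a): set decomposition
lemma set_decomp (φ ε : ℝ) (h0 : 0 < ε) (hπ : ε ≤ Real.pi) :
    {θ : ℝ | ε ≤ |φ - θ| ∧ |φ - θ| ≤ Real.pi}
      = Set.Icc (φ - Real.pi) (φ - ε) ∪ Set.Icc (φ + ε) (φ + Real.pi) := by
  ext θ
  simp only [Set.mem_setOf_eq, Set.mem_union, Set.mem_Icc, le_abs, abs_le]
  constructor
  · rintro ⟨h1 | h1, h2, h3⟩
    · left; constructor <;> linarith
    · right; constructor <;> linarith
  · rintro (⟨h1, h2⟩ | ⟨h1, h2⟩)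
    · exact ⟨Or.inl (by linarith), by linarith, by linarith⟩
    · exact ⟨Or.inr (by linarith), by linarith, by linarith⟩

-- sin nonzero lemmas
lemma sin_half_ne (ε u : ℝ) (h0 : 0 < ε) (hu : u ∈ Set.Icc ε Real.pi) :
    Real.sin (u/2) ≠ 0 := by
  have := Real.pi_pos
  have : 0 < Real.sin (u/2) :=
    Real.sin_pos_of_pos_of_lt_pi (by linarith [hu.1]) (by linarith [hu.2, Real.pi_pos])
  linarith

lemma sin_half_ne' (ε x : ℝ) (h0 : 0 < ε) (h1 : ε ≤ |x|) (h2 : |x| ≤ Real.pi) :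
    Real.sin (x/2) ≠ 0 := by
  have hpi := Real.pi_pos
  have ha := le_abs_self x
  have hb := neg_abs_le x
  rcases le_abs.mp h1 with h | h
  · have : 0 < Real.sin (x/2) :=
      Real.sin_pos_of_pos_of_lt_pi (by linarith) (by linarith)
    exact this.ne'
  · have hpos : 0 < Real.sin (-x/2) :=
      Real.sin_pos_of_pos_of_lt_pi (by linarith) (by linarith)
    have h5 : Real.sin (x/2) = - Real.sin (-x/2) := by
      rw [← Real.sin_neg]; ring_nf
    rw [h5]; exact neg_ne_zero.mpr hpos.ne'

lemma int_P' (n : ℕ) (hn : 1 ≤ n) :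
    ∫ u in (0:ℝ)..Real.pi, Pker n u = Real.pi := by
  unfold Pker; exact int_P n hn

lemma step2 (n : ℕ) (hn : 1 ≤ n) (c : ℝ) :
    Tendsto (fun ε : ℝ => 2*c*∫ u in ε..Real.pi, Pker n u)
      (nhdsWithin 0 (Set.Ioi 0)) (nhds (2*Real.pi*c)) := by
  have hint : ∀ a b : ℝ, IntervalIntegrable (Pker n) volume a b :=
    fun a b => (Pker_cont n).intervalIntegrable a b
  have key : ∀ ε : ℝ, (∫ u in ε..Real.pi, Pker n u)
      = Real.pi - ∫ u in (0:ℝ)..ε, Pker n u := by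
    intro ε
    have h := intervalIntegral.integral_add_adjacent_intervals (hint 0 ε) (hint ε Real.pi)
    have h2 := int_P' n hn
    linarith
  simp only [key]
  have hcont : Continuous fun ε : ℝ => 2*c*(Real.pi - ∫ u in (0:ℝ)..ε, Pker n u) := by
    have := intervalIntegral.continuous_primitive hint 0
    fun_prop
  have ht := (hcont.tendsto 0).mono_left (nhdsWithin_le_nhds (s := Set.Ioi (0:ℝ)))
  convert ht using 2
  rw [intervalIntegral.integral_same]
  ring

lemma key_cot (n : ℕ) (u : ℝ) (hs : Real.sin (u/2) ≠ 0) :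
    Real.cos (u/2) / Real.sin (u/2) * Real.sin (n*u) = Pker n u := by
  rw [div_mul_eq_mul_div, div_eq_iff hs]
  have h := sum_id n u
  unfold Pker
  linarith

lemma step1 (n : ℕ) (φ c ε : ℝ) (g : ℝ → ℝ) (hg_cont : Continuous g)
    (hg : ∀ u : ℝ, g (φ - u) - g (φ + u) = 2 * c * Real.sin (n*u))
    (h0 : 0 < ε) (hπ : ε ≤ Real.pi) :
    (∫ θ in {θ : ℝ | ε ≤ |φ - θ| ∧ |φ - θ| ≤ Real.pi},
        (Real.cos ((φ - θ)/2) / Real.sin ((φ - θ)/2)) * g θ)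
      = 2 * c * ∫ u in ε..Real.pi, Pker n u := by
  have hpi := Real.pi_pos
  set f : ℝ → ℝ := fun θ => (Real.cos ((φ - θ)/2) / Real.sin ((φ - θ)/2)) * g θ with hf
  have hfS : ContinuousOn f {θ : ℝ | ε ≤ |φ - θ| ∧ |φ - θ| ≤ Real.pi} := by
    apply ContinuousOn.mul _ hg_cont.continuousOn
    apply ContinuousOn.div (by fun_prop) (by fun_prop)
    intro θ hθ
    exact sin_half_ne' ε _ h0 hθ.1 hθ.2
  have hsub := (set_decomp φ ε h0 hπ)
  have hsubL : Set.Icc (φ - Real.pi) (φ - ε) ⊆ {θ : ℝ | ε ≤ |φ - θ| ∧ |φ - θ| ≤ Real.pi} := by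
    rw [hsub]; exact Set.subset_union_left
  have hsubR : Set.Icc (φ + ε) (φ + Real.pi) ⊆ {θ : ℝ | ε ≤ |φ - θ| ∧ |φ - θ| ≤ Real.pi} := by
    rw [hsub]; exact Set.subset_union_right
  have hIL : IntegrableOn f (Set.Icc (φ - Real.pi) (φ - ε)) :=
    (hfS.mono hsubL).integrableOn_Icc
  have hIR : IntegrableOn f (Set.Icc (φ + ε) (φ + Real.pi)) :=
    (hfS.mono hsubR).integrableOn_Icc
  have hdisj : Disjoint (Set.Icc (φ - Real.pi) (φ - ε)) (Set.Icc (φ + ε) (φ + Real.pi)) := by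
    apply Set.disjoint_left.mpr
    intro x hx hx'
    simp only [Set.mem_Icc] at hx hx'
    linarith [hx.2, hx'.1]
  -- interval integrability of substituted functions
  have hintL : IntervalIntegrable (fun u => f (φ - u)) volume ε Real.pi := by
    apply ContinuousOn.intervalIntegrable
    rw [Set.uIcc_of_le hπ]
    apply (hfS.mono hsubL).comp (by fun_prop : Continuous fun u : ℝ => φ - u).continuousOn
    intro u hu
    simp only [Set.mem_Icc] at hu ⊢
    constructor <;> linarith [hu.1, hu.2]
  have hintR : IntervalIntegrable (fun u => f (φ + u)) volume ε Real.pi := by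
    apply ContinuousOn.intervalIntegrable
    rw [Set.uIcc_of_le hπ]
    apply (hfS.mono hsubR).comp (by fun_prop : Continuous fun u : ℝ => φ + u).continuousOn
    intro u hu
    simp only [Set.mem_Icc] at hu ⊢
    constructor <;> linarith [hu.1, hu.2]
  calc (∫ θ in {θ : ℝ | ε ≤ |φ - θ| ∧ |φ - θ| ≤ Real.pi}, f θ)
      = (∫ θ in Set.Icc (φ - Real.pi) (φ - ε), f θ)
        + ∫ θ in Set.Icc (φ + ε) (φ + Real.pi), f θ := by
        rw [hsub, setIntegral_union hdisj measurableSet_Icc hIL hIR]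
    _ = (∫ θ in (φ - Real.pi)..(φ - ε), f θ) + ∫ θ in (φ + ε)..(φ + Real.pi), f θ := by
        rw [integral_Icc_eq_integral_Ioc, integral_Icc_eq_integral_Ioc,
          ← intervalIntegral.integral_of_le (by linarith : φ - Real.pi ≤ φ - ε),
          ← intervalIntegral.integral_of_le (by linarith : φ + ε ≤ φ + Real.pi)]
    _ = (∫ u in ε..Real.pi, f (φ - u)) + ∫ u in ε..Real.pi, f (φ + u) := by
        rw [intervalIntegral.integral_comp_sub_left f φ,
          intervalIntegral.integral_comp_add_left f φ]
    _ = ∫ u in ε..Real.pi, (f (φ - u) + f (φ + u)) :=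
        (intervalIntegral.integral_add hintL hintR).symm
    _ = ∫ u in ε..Real.pi, 2 * c * Pker n u := by
        apply intervalIntegral.integral_congr
        intro u hu
        rw [Set.uIcc_of_le hπ, Set.mem_Icc] at hu
        have hs : Real.sin (u/2) ≠ 0 := sin_half_ne ε u h0 (Set.mem_Icc.mpr hu)
        show (Real.cos ((φ - (φ - u))/2) / Real.sin ((φ - (φ - u))/2)) * g (φ - u)
          + (Real.cos ((φ - (φ + u))/2) / Real.sin ((φ - (φ + u))/2)) * g (φ + u) = _
        rw [show φ - (φ - u) = u by ring, show φ - (φ + u) = -u by ring,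
          show (-u)/2 = -(u/2) by ring, Real.cos_neg, Real.sin_neg]
        have hgu := hg u
        have expand : ∀ A B : ℝ, Real.cos (u/2)/Real.sin (u/2) * A
            + -(Real.cos (u/2)/Real.sin (u/2)) * B
            = Real.cos (u/2)/Real.sin (u/2) * (A - B) := fun A B => by ring
        rw [div_neg, expand, hgu,
          show Real.cos (u/2)/Real.sin (u/2) * (2*c*Real.sin (n*u))
            = 2*c*(Real.cos (u/2)/Real.sin (u/2) * Real.sin (n*u)) by ring,
          key_cot n u hs]
    _ = 2 * c * ∫ u in ε..Real.pi, Pker n u := by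
        rw [intervalIntegral.integral_const_mul]

lemma pv_aux (n : ℕ) (hn : 1 ≤ n) (φ c : ℝ) (g : ℝ → ℝ) (hg_cont : Continuous g)
    (hg : ∀ u : ℝ, g (φ - u) - g (φ + u) = 2 * c * Real.sin (n*u)) :
    Tendsto (fun ε : ℝ => ∫ θ in {θ : ℝ | ε ≤ |φ - θ| ∧ |φ - θ| ≤ Real.pi},
        (Real.cos ((φ - θ) / 2) / Real.sin ((φ - θ) / 2)) * g θ)
      (nhdsWithin 0 (Set.Ioi 0)) (nhds (2 * Real.pi * c)) := by
  apply Tendsto.congr' _ (step2 n hn c)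
  filter_upwards [Ioo_mem_nhdsGT_of_mem (Set.mem_Ico.mpr ⟨le_refl (0:ℝ), Real.pi_pos⟩)]
    with ε hε
  exact (step1 n φ c ε g hg_cont hg hε.1 hε.2.le).symm

/-- Principal-value Fourier integrals of the cotangent kernel over one period:
`P∫_{|φ-θ|≤π} cot((φ-θ)/2) cos(nθ) dθ = 2π sin(nφ)` and
`P∫_{|φ-θ|≤π} cot((φ-θ)/2) sin(nθ) dθ = -2π cos(nφ)`. -/
theorem pv_cotangent_fourier (n : ℕ) (hn : 1 ≤ n) (φ : ℝ) :
    Tendsto (fun ε : ℝ =>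
        ∫ θ in {θ : ℝ | ε ≤ |φ - θ| ∧ |φ - θ| ≤ Real.pi},
          (Real.cos ((φ - θ) / 2) / Real.sin ((φ - θ) / 2)) * Real.cos (n * θ))
      (nhdsWithin 0 (Set.Ioi 0)) (nhds (2 * Real.pi * Real.sin (n * φ))) ∧
    Tendsto (fun ε : ℝ =>
        ∫ θ in {θ : ℝ | ε ≤ |φ - θ| ∧ |φ - θ| ≤ Real.pi},
          (Real.cos ((φ - θ) / 2) / Real.sin ((φ - θ) / 2)) * Real.sin (n * θ))
      (nhdsWithin 0 (Set.Ioi 0)) (nhds (-(2 * Real.pi) * Real.cos (n * φ))) := by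
  constructor
  · exact pv_aux n hn φ (Real.sin (n*φ)) (fun θ => Real.cos (n*θ)) (by fun_prop)
      (fun u => by
        rw [show (n:ℝ)*(φ-u) = n*φ - n*u by ring, show (n:ℝ)*(φ+u) = n*φ + n*u by ring,
          Real.cos_sub, Real.cos_add]
        ring)
  · rw [show -(2*Real.pi)*Real.cos (n*φ) = 2*Real.pi*(-Real.cos (n*φ)) by ring]
    exact pv_aux n hn φ (-Real.cos (n*φ)) (fun θ => Real.sin (n*θ)) (by fun_prop)
      (fun u => by
        rw [show (n:ℝ)*(φ-u) = n*φ - n*u by ring, show (n:ℝ)*(φ+u) = n*φ + n*u by ring,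
          Real.sin_sub, Real.sin_add]
        ring)
end

section
/- Let 0 < q < 1 and γ ≥ 0. Then the function ρ(φ) = (1/2π)[ 1 + 2γ ( q cos(φ) − q² ) / ( 1 − 2q cos(φ) + q² ) ] satisfies ρ(φ) ≥ 0 for all φ ∈ [−π, π] if and only if γ ≤ (1+q)/(2q). Moreover the minimum of ρ over [−π,π] is attained at φ = ±π. -/
/-!
Writing `c = cos φ`, the ratio `(q c - q²)/(1 - 2qc + q²)` equals `(P - 1)/2` with
`P = (1 - q²)/(1 - 2qc + q²)` the Poisson kernel, which for `0 ≤ q < 1` is positive and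
increasing in `c`. Hence for `γ ≥ 0` the density is smallest where `cos φ = -1`, i.e. at
`φ = ±π`, where the ratio is `-q/(1+q)` and the density is `(1/2π)(1 - 2γq/(1+q))`; this is
non-negative exactly when `γ ≤ (1+q)/(2q)`.
-/

open Real

section PoissonRatio

variable {q : ℝ}

lemma one_sub_two_mul_add_sq_pos (hq0 : 0 ≤ q) (hq1 : q < 1) {c : ℝ} (hc : c ≤ 1) :
    0 < 1 - 2 * q * c + q ^ 2 := by
  nlinarith [mul_le_mul_of_nonneg_left hc hq0]

lemma ratio_eq_poisson_sub_one_div_two {c : ℝ} (h : 1 - 2 * q * c + q ^ 2 ≠ 0) :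
    (q * c - q ^ 2) / (1 - 2 * q * c + q ^ 2) =
      ((1 - q ^ 2) / (1 - 2 * q * c + q ^ 2) - 1) / 2 := by
  rw [div_sub_one h, div_div, div_eq_div_iff h (mul_ne_zero h two_ne_zero)]
  ring

lemma monotoneOn_ratio (hq0 : 0 ≤ q) (hq1 : q < 1) :
    MonotoneOn (fun c => (q * c - q ^ 2) / (1 - 2 * q * c + q ^ 2)) (Set.Iic 1) := by
  intro c hc c' hc' hcc'
  have hD := one_sub_two_mul_add_sq_pos hq0 hq1 hc
  have hD' := one_sub_two_mul_add_sq_pos hq0 hq1 hc'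
  have hnum : 0 ≤ 1 - q ^ 2 := by nlinarith
  dsimp only
  rw [ratio_eq_poisson_sub_one_div_two hD.ne', ratio_eq_poisson_sub_one_div_two hD'.ne']
  gcongr

lemma ratio_neg_one (hq : 1 + q ≠ 0) :
    (q * -1 - q ^ 2) / (1 - 2 * q * -1 + q ^ 2) = -(q / (1 + q)) := by
  rw [show q * -1 - q ^ 2 = -q * (1 + q) by ring,
    show 1 - 2 * q * -1 + q ^ 2 = (1 + q) * (1 + q) by ring, mul_div_mul_right _ _ hq, neg_div]

end PoissonRatio

lemma one_add_two_mul_neg_div_nonneg_iff {q γ : ℝ} (hq : 0 < q) :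
    0 ≤ 1 + 2 * γ * -(q / (1 + q)) ↔ γ ≤ (1 + q) / (2 * q) := by
  have h : 1 + 2 * γ * -(q / (1 + q)) = (1 + q - γ * (2 * q)) / (1 + q) := by
    field_simp
    ring
  rw [h, le_div_iff₀ (by positivity), le_div_iff₀ (by positivity)]
  constructor <;> intro <;> linarith

lemma density_cos_pi_le {q γ : ℝ} (hq0 : 0 ≤ q) (hq1 : q < 1) (hγ : 0 ≤ γ) (φ : ℝ) :
    1 / (2 * π) * (1 + 2 * γ * ((q * cos π - q ^ 2) / (1 - 2 * q * cos π + q ^ 2))) ≤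
      1 / (2 * π) * (1 + 2 * γ * ((q * cos φ - q ^ 2) / (1 - 2 * q * cos φ + q ^ 2))) := by
  gcongr 1 / (2 * π) * (1 + 2 * γ * ?_)
  rw [cos_pi]
  exact monotoneOn_ratio hq0 hq1 (by norm_num : (-1 : ℝ) ≤ 1) (cos_le_one φ)
    (neg_one_le_cos φ)

/-- Non-negativity of the weak-coupling eigenvalue density for exponentially decaying
interaction: `ρ(φ) = (1/2π)[1 + 2γ (q cos φ - q²)/(1 - 2q cos φ + q²)]` is non-negative on
`[-π,π]` iff `γ ≤ (1+q)/(2q)`, and its minimum over `[-π,π]` is attained at `φ = ±π`. -/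
theorem rho_nonneg_iff_and_min (q γ : ℝ) (hq0 : 0 < q) (hq1 : q < 1) (hγ : 0 ≤ γ) :
    ((∀ φ ∈ Set.Icc (-Real.pi) Real.pi,
        0 ≤ (1 / (2 * Real.pi)) *
          (1 + 2 * γ * ((q * Real.cos φ - q ^ 2) / (1 - 2 * q * Real.cos φ + q ^ 2)))) ↔
      γ ≤ (1 + q) / (2 * q)) ∧
    (∀ φ ∈ Set.Icc (-Real.pi) Real.pi,
        (1 / (2 * Real.pi)) *
            (1 + 2 * γ * ((q * Real.cos Real.pi - q ^ 2) /
              (1 - 2 * q * Real.cos Real.pi + q ^ 2))) ≤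
          (1 / (2 * Real.pi)) *
            (1 + 2 * γ * ((q * Real.cos φ - q ^ 2) / (1 - 2 * q * Real.cos φ + q ^ 2))) ∧
        (1 / (2 * Real.pi)) *
            (1 + 2 * γ * ((q * Real.cos (-Real.pi) - q ^ 2) /
              (1 - 2 * q * Real.cos (-Real.pi) + q ^ 2))) ≤
          (1 / (2 * Real.pi)) *
            (1 + 2 * γ * ((q * Real.cos φ - q ^ 2) / (1 - 2 * q * Real.cos φ + q ^ 2)))) := by
  have hmin := density_cos_pi_le hq0.le hq1 hγ
  have hπ : 0 < 1 / (2 * π) := by positivity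
  have hat_pi : 0 ≤ 1 + 2 * γ * ((q * cos π - q ^ 2) / (1 - 2 * q * cos π + q ^ 2)) ↔
      γ ≤ (1 + q) / (2 * q) := by
    rw [cos_pi, ratio_neg_one (by positivity), one_add_two_mul_neg_div_nonneg_iff hq0]
  refine ⟨⟨fun h => ?_, fun h φ _ => ?_⟩, fun φ _ => ?_⟩
  · exact hat_pi.1 ((mul_nonneg_iff_of_pos_left hπ).1 (h π ⟨by linarith [pi_pos], le_rfl⟩))
  · exact (mul_nonneg hπ.le (hat_pi.2 h)).trans (hmin φ)
  · rw [cos_neg]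
    exact ⟨hmin φ, hmin φ⟩
end

section
/- (Toeplitz/Bessel determinant for asymmetric hopping, regime 0 ≤ v < 1.) Let w ∈ ℂ, 0 ≤ v < 1, and let φ_v ∈ ℝ be defined by cosh(φ_v) = 1/√(1−v²) and sinh(φ_v) = v/√(1−v²) (i.e. φ_v = artanh v). Define c_n = (1/2π) ∫_{-π}^{π} exp( 2w√(1−v²) cos θ ) e^{-inθ} dθ for n ∈ ℤ. Then for every N ≥ 1, (1/N!) ∫_{[-π,π]^N} ∏_{1≤j<k≤N} |e^{iφ_j} − e^{iφ_k}|² ∏_{j=1}^{N} exp( 2w ( cos φ_j − i v sin φ_j ) ) (dφ_j/2π) = det( e^{(k−j)φ_v} c_{j−k} )_{j,k=1}^{N}. -/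
/-!
Write the squared Vandermonde as `det (e^{i j φ_k}) * det (e^{-i j φ_k})`. Expanding both
determinants over permutations and integrating variable by variable (Andréief's identity) turns
the `N`-fold integral into `N!` times the Toeplitz determinant of the Fourier coefficients of the
weight (Heine's identity).

The weight is `exp (A e^{iθ} + B e^{-iθ})` with `A = w (1 - v) = e^{-φ_v} w √(1-v²)` and
`B = w (1 + v) = e^{φ_v} w √(1-v²)`. In the double power series of the exponential the `n`-th
Fourier coefficient collects the terms `A^p B^q` with `p - q = n`, so replacing `(A, B)` by
`(e^{-s} A, e^{s} B)` multiplies it by `e^{-n s}`. With `s = φ_v` this gives the factor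
`e^{(k-j) φ_v}` in front of the Bessel coefficient `c_{j-k}` of `exp (2 w √(1-v²) cos θ)`.
-/

open MeasureTheory Complex ComplexConjugate Matrix
open scoped Real

theorem sum_sign_mul_sign_mul_prod_eq_factorial_mul_det {ι R : Type*} [Fintype ι]
    [DecidableEq ι] [CommRing R] (G : Matrix ι ι R) :
    ∑ σ : Equiv.Perm ι, ∑ τ : Equiv.Perm ι,
        ((Equiv.Perm.sign σ * Equiv.Perm.sign τ : ℤˣ) : R) * ∏ k, G (σ k) (τ k) =
      ((Fintype.card ι).factorial : R) * G.det := by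
  have inner (σ : Equiv.Perm ι) :
      ∑ τ : Equiv.Perm ι,
          ((Equiv.Perm.sign σ * Equiv.Perm.sign τ : ℤˣ) : R) * ∏ k, G (σ k) (τ k) =
        G.det := by
    have h := det_permute σ G
    rw [← det_transpose, det_apply] at h
    simp only [transpose_apply, submatrix_apply, id_eq, Units.smul_def, zsmul_eq_mul] at h
    calc _ = ((Equiv.Perm.sign σ : ℤ) : R) *
          ∑ τ : Equiv.Perm ι, ((Equiv.Perm.sign τ : ℤ) : R) * ∏ k, G (σ k) (τ k) := by
          simp only [Units.val_mul, Int.cast_mul, mul_assoc, Finset.mul_sum]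
      _ = G.det := by
          rw [h, ← mul_assoc, ← Int.cast_mul, ← Units.val_mul, Int.units_mul_self,
            Units.val_one, Int.cast_one, one_mul]
  simp only [inner, Finset.sum_const, Finset.card_univ, Fintype.card_perm, nsmul_eq_mul]

theorem integral_det_mul_det_eq_factorial_mul_det_s16 {α ι : Type*} [MeasurableSpace α] [Fintype ι]
    [DecidableEq ι] (μ : Measure α) [SigmaFinite μ] (f g : ι → α → ℂ)
    (hfg : ∀ i j, Integrable (fun a => f i a * g j a) μ) :
    ∫ x, (of fun i k => f i (x k)).det * (of fun j k => g j (x k)).det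
        ∂(Measure.pi fun _ => μ) =
      (Fintype.card ι).factorial * (of fun i j => ∫ a, f i a * g j a ∂μ).det := by
  have expand (x : ι → α) :
      (of fun i k => f i (x k)).det * (of fun j k => g j (x k)).det =
        ∑ σ : Equiv.Perm ι, ∑ τ : Equiv.Perm ι,
          ((Equiv.Perm.sign σ * Equiv.Perm.sign τ : ℤˣ) : ℂ) *
            ∏ k, f (σ k) (x k) * g (τ k) (x k) := by
    simp only [det_apply, of_apply, Finset.sum_mul_sum, Units.smul_def,
      zsmul_eq_mul, Units.val_mul, Int.cast_mul, Finset.prod_mul_distrib]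
    exact Finset.sum_congr rfl fun σ _ => Finset.sum_congr rfl fun τ _ => by ring
  have hint (σ τ : Equiv.Perm ι) :
      Integrable (fun x : ι → α => ∏ k, f (σ k) (x k) * g (τ k) (x k))
        (Measure.pi fun _ => μ) :=
    Integrable.fintype_prod fun k => hfg (σ k) (τ k)
  simp_rw [expand]
  rw [integral_finsetSum _ fun σ _ => integrable_finsetSum _ fun τ _ => (hint σ τ).const_mul _]
  refine .trans (Finset.sum_congr rfl fun σ _ => ?_)
    (sum_sign_mul_sign_mul_prod_eq_factorial_mul_det _)
  rw [integral_finsetSum _ fun τ _ => (hint σ τ).const_mul _]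
  refine Finset.sum_congr rfl fun τ _ => ?_
  rw [integral_const_mul, integral_fintype_prod_eq_prod (fun k a => f (σ k) a * g (τ k) a)]
  rfl

theorem prod_ofReal_norm_sub_sq_eq_det_vandermonde_mul {N : ℕ} (z : Fin N → ℂ) :
    (∏ j, ∏ k, if j < k then ((‖z j - z k‖ : ℝ) : ℂ) ^ 2 else 1) =
      (vandermonde z).det * (vandermonde fun k => conj (z k)).det := by
  rw [det_vandermonde, det_vandermonde, ← Finset.prod_mul_distrib]
  refine Finset.prod_congr rfl fun j _ => ?_
  rw [← Finset.prod_mul_distrib, ← Finset.prod_filter]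
  refine Finset.prod_congr (by ext; simp) fun k _ => ?_
  rw [← map_sub, mul_conj', ← norm_neg, neg_sub]

theorem fourierCoeffOn_neg_pi_pi (W : ℝ → ℂ) (n : ℤ) :
    fourierCoeffOn (neg_lt_self Real.pi_pos) W n =
      1 / (2 * π) * ∫ θ in -π..π, W θ * exp (-I * n * θ) := by
  rw [fourierCoeffOn_eq_integral, real_smul, sub_neg_eq_add, ← two_mul]
  push_cast
  congr 1
  refine intervalIntegral.integral_congr fun θ _ => ?_
  rw [fourier_coe_apply, smul_eq_mul, mul_comm]
  congr 2
  push_cast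
  field_simp

theorem setIntegral_exp_pow_mul_conj_pow_mul (W : ℝ → ℂ) (j k : ℕ) :
    ∫ θ in Set.Icc (-π) π,
        exp (I * θ) ^ j * (conj (exp (I * θ)) ^ k * (W θ * (1 / (2 * π)))) =
      fourierCoeffOn (neg_lt_self Real.pi_pos) W ((k : ℤ) - j) := by
  rw [fourierCoeffOn_neg_pi_pi, integral_Icc_eq_integral_Ioc,
    ← intervalIntegral.integral_of_le (neg_le_self Real.pi_pos.le),
    ← intervalIntegral.integral_const_mul]
  refine intervalIntegral.integral_congr fun θ _ => ?_
  rw [← exp_conj, map_mul, conj_I, conj_ofReal, ← exp_nat_mul, ← exp_nat_mul]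
  have : exp (j * (I * θ)) * exp (k * (-I * θ)) =
      exp (-I * ((k : ℤ) - (j : ℤ) : ℤ) * θ) := by
    rw [← exp_add]; push_cast; ring_nf
  rw [← this]
  ring

theorem heine_identity (W : ℝ → ℂ) (hW : IntegrableOn W (Set.Icc (-π) π)) (N : ℕ) :
    (1 / (N.factorial : ℂ)) *
      ∫ φ : Fin N → ℝ in Set.univ.pi (fun _ => Set.Icc (-π) π),
        (∏ j : Fin N, ∏ k : Fin N, if j < k then
            ((‖exp (I * φ j) - exp (I * φ k)‖ : ℝ) : ℂ) ^ 2 else 1) *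
          (∏ j, W (φ j)) * (1 / (2 * (π : ℂ))) ^ N =
      (of fun j k : Fin N => fourierCoeffOn (neg_lt_self Real.pi_pos) W ((j : ℤ) - k)).det := by
  set f : Fin N → ℝ → ℂ := fun j θ => exp (I * θ) ^ (j : ℕ)
  set g : Fin N → ℝ → ℂ :=
    fun k θ => conj (exp (I * θ)) ^ (k : ℕ) * (W θ * (1 / (2 * π)))
  have integrand (φ : Fin N → ℝ) :
      (∏ j : Fin N, ∏ k : Fin N, if j < k then
            ((‖exp (I * φ j) - exp (I * φ k)‖ : ℝ) : ℂ) ^ 2 else 1) *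
          (∏ j, W (φ j)) * (1 / (2 * (π : ℂ))) ^ N =
        (of fun j k => f j (φ k)).det * (of fun j k => g j (φ k)).det := by
    have hV (z : Fin N → ℂ) :
        (of fun j k : Fin N => z k ^ (j : ℕ)).det = (vandermonde z).det :=
      (det_transpose _).symm
    have hg : (of fun j k => g j (φ k)).det =
        (∏ k, W (φ k) * (1 / (2 * π))) *
          (vandermonde fun k => conj (exp (I * φ k))).det := by
      rw [← hV, ← det_mul_row]
      simp only [g, of_apply, mul_comm]
    rw [hg, hV, prod_ofReal_norm_sub_sq_eq_det_vandermonde_mul, Finset.prod_mul_distrib,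
      Finset.prod_const, Finset.card_univ, Fintype.card_fin]
    ring
  have hfg (j k : Fin N) :
      IntegrableOn (fun θ => f j θ * g k θ) (Set.Icc (-π) π) := by
    have := hW.continuousOn_mul
      (g := fun θ => f j θ * conj (exp (I * θ)) ^ (k : ℕ) * (1 / (2 * π)))
      (by fun_prop) isCompact_Icc
    refine this.congr_fun (fun θ _ => ?_) measurableSet_Icc
    simp only [f, g]
    ring
  simp_rw [integrand]
  rw [volume_pi, Measure.restrict_pi_pi, integral_det_mul_det_eq_factorial_mul_det_s16 _ f g hfg,
    Fintype.card_fin, ← mul_assoc, one_div_mul_cancel (by exact_mod_cast N.factorial_ne_zero),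
    one_mul, ← det_transpose]
  congr 1
  ext j k
  exact setIntegral_exp_pow_mul_conj_pow_mul W k j

theorem integral_exp_I_mul_int (m : ℤ) :
    ∫ θ in -π..π, exp (I * m * θ) = if m = 0 then 2 * (π : ℂ) else 0 := by
  split_ifs with hm
  · simp [hm]; ring
  · rw [integral_exp_mul_complex (by simp [hm])]
    have : exp (I * m * π) = exp (I * m * (-π : ℝ)) :=
      exp_eq_exp_iff_exists_int.mpr ⟨m, by push_cast; ring⟩
    rw [this, sub_self, zero_div]

theorem summable_norm_pow_div_factorial (z : ℂ) :
    Summable fun p : ℕ => ‖z ^ p / p.factorial‖ := by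
  simpa [norm_div, norm_pow] using Real.summable_pow_div_factorial ‖z‖

theorem exp_add_exp_neg_mul_exp_eq_tsum (A B : ℂ) (n : ℤ) (θ : ℝ) :
    exp (A * exp (I * θ) + B * exp (-(I * θ))) * exp (-I * n * θ) =
      ∑' pq : ℕ × ℕ, A ^ pq.1 * B ^ pq.2 / (pq.1.factorial * pq.2.factorial) *
        exp (I * ((pq.1 - pq.2 - n : ℤ) : ℂ) * θ) := by
  have exp_eq_tsum (z : ℂ) : exp z = ∑' p : ℕ, z ^ p / p.factorial := by
    rw [exp_eq_exp_ℂ, NormedSpace.exp_eq_tsum_div]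
  rw [exp_add, exp_eq_tsum (A * _), exp_eq_tsum (B * _),
    tsum_mul_tsum_of_summable_norm (summable_norm_pow_div_factorial _)
      (summable_norm_pow_div_factorial _), ← tsum_mul_right]
  refine tsum_congr fun pq => ?_
  have : exp (I * ((pq.1 - pq.2 - n : ℤ) : ℂ) * θ) =
      exp (I * θ) ^ pq.1 * exp (-(I * θ)) ^ pq.2 * exp (-I * n * θ) := by
    rw [← exp_nat_mul, ← exp_nat_mul, ← exp_add, ← exp_add]; push_cast; ring_nf
  rw [this, mul_pow, mul_pow]
  ring

theorem fourierCoeffOn_exp_add_exp_neg (A B : ℂ) (n : ℤ) :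
    fourierCoeffOn (neg_lt_self Real.pi_pos)
        (fun θ => exp (A * exp (I * θ) + B * exp (-(I * θ)))) n =
      ∑' pq : ℕ × ℕ, if (pq.1 : ℤ) - pq.2 = n then
        A ^ pq.1 * B ^ pq.2 / (pq.1.factorial * pq.2.factorial) else 0 := by
  set c : ℕ × ℕ → ℂ := fun pq => A ^ pq.1 * B ^ pq.2 / (pq.1.factorial * pq.2.factorial)
  set F : ℕ × ℕ → ℝ → ℂ :=
    fun pq θ => c pq * exp (I * ((pq.1 - pq.2 - n : ℤ) : ℂ) * θ)
  have hc : Summable fun pq => ‖c pq‖ := by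
    refine ((Real.summable_pow_div_factorial ‖A‖).mul_of_nonneg
      (Real.summable_pow_div_factorial ‖B‖) (fun _ => by positivity)
      (fun _ => by positivity)).congr fun pq => ?_
    simp [c, div_mul_div_comm]
  have hF_norm (pq : ℕ × ℕ) (θ : ℝ) : ‖F pq θ‖ = ‖c pq‖ := by
    simp [F, norm_exp]
  have hπ : -π ≤ π := neg_le_self Real.pi_pos.le
  have hF_int (pq : ℕ × ℕ) : Integrable (F pq) (volume.restrict (Set.Ioc (-π) π)) :=
    (by fun_prop : Continuous (F pq)).integrableOn_Ioc
  have hF_sum : Summable fun pq => ∫ θ in Set.Ioc (-π) π, ‖F pq θ‖ := by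
    simp_rw [hF_norm, setIntegral_const, Real.volume_real_Ioc_of_le hπ, smul_eq_mul]
    exact hc.mul_left _
  have hF_coeff (pq : ℕ × ℕ) : ∫ θ in Set.Ioc (-π) π, F pq θ =
      2 * π * if (pq.1 : ℤ) - pq.2 = n then c pq else 0 := by
    rw [← intervalIntegral.integral_of_le hπ, intervalIntegral.integral_const_mul,
      integral_exp_I_mul_int]
    simp only [sub_eq_zero]
    split_ifs <;> ring
  rw [fourierCoeffOn_neg_pi_pi, intervalIntegral.integral_of_le hπ]
  simp_rw [exp_add_exp_neg_mul_exp_eq_tsum]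
  rw [← integral_tsum_of_summable_integral_norm hF_int hF_sum]
  simp_rw [hF_coeff]
  rw [tsum_mul_left, ← mul_assoc, one_div_mul_cancel (by simp [Real.pi_ne_zero]), one_mul]

theorem fourierCoeffOn_exp_add_exp_neg_rescale (A B s : ℂ) (n : ℤ) :
    fourierCoeffOn (neg_lt_self Real.pi_pos)
        (fun θ => exp (exp (-s) * A * exp (I * θ) + exp s * B * exp (-(I * θ)))) n =
      exp (-n * s) * fourierCoeffOn (neg_lt_self Real.pi_pos)
        (fun θ => exp (A * exp (I * θ) + B * exp (-(I * θ)))) n := by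
  rw [fourierCoeffOn_exp_add_exp_neg, fourierCoeffOn_exp_add_exp_neg, ← tsum_mul_left]
  refine tsum_congr fun pq => ?_
  split_ifs with h
  · have : exp (-n * s) = exp (-s) ^ pq.1 * exp s ^ pq.2 := by
      rw [← exp_nat_mul, ← exp_nat_mul, ← exp_add, ← h]; push_cast; ring_nf
    rw [this, mul_pow, mul_pow]
    ring
  · rw [mul_zero]

theorem two_mul_cos_sub_I_mul_sin (v θ : ℝ) :
    2 * ((Real.cos θ : ℂ) - I * v * Real.sin θ) =
      (1 - v) * exp (I * θ) + (1 + v) * exp (-(I * θ)) := by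
  rw [ofReal_cos, ofReal_sin, cos, sin]
  ring_nf
  rw [I_sq]
  ring

theorem exp_mul_sqrt_of_cosh_of_sinh {v φ : ℝ} (hcosh : Real.cosh φ = 1 / √(1 - v ^ 2))
    (hsinh : Real.sinh φ = v / √(1 - v ^ 2)) :
    Real.exp φ * √(1 - v ^ 2) = 1 + v ∧ Real.exp (-φ) * √(1 - v ^ 2) = 1 - v := by
  have hs : √(1 - v ^ 2) ≠ 0 := fun h => by
    simpa [hcosh, h] using Real.cosh_pos φ
  rw [← Real.cosh_add_sinh, ← Real.cosh_sub_sinh, hcosh, hsinh]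
  constructor <;> field_simp

theorem asymmetric_hopping_det_subcritical_general
    (w : ℂ) (v : ℝ) (φv : ℝ)
    (hcosh : Real.cosh φv = 1 / Real.sqrt (1 - v ^ 2))
    (hsinh : Real.sinh φv = v / Real.sqrt (1 - v ^ 2))
    (N : ℕ) :
    (1 / (N.factorial : ℂ)) *
      ∫ φ : Fin N → ℝ in Set.univ.pi (fun _ => Set.Icc (-Real.pi) Real.pi),
        ((∏ j : Fin N, ∏ k : Fin N, if j < k then
            ((‖Complex.exp (Complex.I * φ j) - Complex.exp (Complex.I * φ k)‖ : ℝ) : ℂ) ^ 2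
          else 1) *
          (∏ j : Fin N,
            Complex.exp (2 * w * ((Real.cos (φ j) : ℂ) - Complex.I * v * Real.sin (φ j)))) *
          (1 / (2 * (Real.pi : ℂ))) ^ N) =
      Matrix.det (Matrix.of fun j k : Fin N =>
        ((Real.exp (((k : ℝ) - (j : ℝ)) * φv) : ℝ) : ℂ) *
          ((1 / (2 * (Real.pi : ℂ))) *
            ∫ θ in (-Real.pi)..Real.pi,
              Complex.exp (2 * w * (Real.sqrt (1 - v ^ 2) : ℝ) * Real.cos θ) *
                Complex.exp (-Complex.I * ((j : ℤ) - (k : ℤ)) * θ))) := by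
  obtain ⟨hplus, hminus⟩ := exp_mul_sqrt_of_cosh_of_sinh hcosh hsinh
  set a : ℂ := w * √(1 - v ^ 2)
  have hweight (θ : ℝ) : 2 * w * ((Real.cos θ : ℂ) - I * v * Real.sin θ) =
      exp (-φv) * a * exp (I * θ) + exp φv * a * exp (-(I * θ)) := by
    have hp : exp φv * a = w * (1 + v) := by
      rw [← ofReal_exp, mul_left_comm, ← ofReal_mul, hplus]; push_cast; ring
    have hm : exp (-φv) * a = w * (1 - v) := by
      rw [← ofReal_neg, ← ofReal_exp, mul_left_comm, ← ofReal_mul, hminus]; push_cast; ring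
    rw [hp, hm, mul_right_comm, two_mul_cos_sub_I_mul_sin]
    ring
  have hcos (θ : ℝ) : 2 * w * (√(1 - v ^ 2) : ℝ) * Real.cos θ =
      a * exp (I * θ) + a * exp (-(I * θ)) := by
    rw [ofReal_cos, cos]
    simp only [a]
    ring_nf
  rw [heine_identity (fun θ => exp (2 * w * ((Real.cos θ : ℂ) - I * v * Real.sin θ)))
    (by fun_prop : Continuous _).integrableOn_Icc N]
  congr 1
  ext j k
  simp only [of_apply, hweight]
  rw [fourierCoeffOn_exp_add_exp_neg_rescale, fourierCoeffOn_neg_pi_pi]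
  simp only [← hcos]
  congr 1
  · rw [ofReal_exp]; push_cast; ring_nf
  · push_cast; ring_nf

/-- Toeplitz/Bessel determinant representation of the complex-time Loschmidt amplitude for
the XX chain with asymmetric hopping, regime `0 ≤ v < 1`: the matrix integral with weight
`exp(2w(cos φ - iv sin φ))` equals `det(e^{(k-j)φ_v} c_{j-k})`, where
`c_n = (1/2π)∫ exp(2w√(1-v²) cos θ) e^{-inθ} dθ` (i.e. `I_n(2w√(1-v²))`) and
`cosh φ_v = 1/√(1-v²)`, `sinh φ_v = v/√(1-v²)`. -/
theorem asymmetric_hopping_det_subcritical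
    (w : ℂ) (v : ℝ) (hv0 : 0 ≤ v) (hv1 : v < 1) (φv : ℝ)
    (hcosh : Real.cosh φv = 1 / Real.sqrt (1 - v ^ 2))
    (hsinh : Real.sinh φv = v / Real.sqrt (1 - v ^ 2))
    (N : ℕ) (hN : 1 ≤ N) :
    (1 / (N.factorial : ℂ)) *
      ∫ φ : Fin N → ℝ in Set.univ.pi (fun _ => Set.Icc (-Real.pi) Real.pi),
        ((∏ j : Fin N, ∏ k : Fin N, if j < k then
            ((‖Complex.exp (Complex.I * φ j) - Complex.exp (Complex.I * φ k)‖ : ℝ) : ℂ) ^ 2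
          else 1) *
          (∏ j : Fin N,
            Complex.exp (2 * w * ((Real.cos (φ j) : ℂ) - Complex.I * v * Real.sin (φ j)))) *
          (1 / (2 * (Real.pi : ℂ))) ^ N) =
      Matrix.det (Matrix.of fun j k : Fin N =>
        ((Real.exp (((k : ℝ) - (j : ℝ)) * φv) : ℝ) : ℂ) *
          ((1 / (2 * (Real.pi : ℂ))) *
            ∫ θ in (-Real.pi)..Real.pi,
              Complex.exp (2 * w * (Real.sqrt (1 - v ^ 2) : ℝ) * Real.cos θ) *
                Complex.exp (-Complex.I * ((j : ℤ) - (k : ℤ)) * θ))) :=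
  asymmetric_hopping_det_subcritical_general w v φv hcosh hsinh N
end

section
/- (Toeplitz/Bessel determinant for asymmetric hopping, regime v > 1.) Let w ∈ ℂ, v > 1, and let φ̂_v ∈ ℝ be defined by cosh(φ̂_v) = v/√(v²−1) and sinh(φ̂_v) = 1/√(v²−1). Define ĉ_n = (1/2π) ∫_{-π}^{π} exp( −2iw√(v²−1) cos θ ) e^{-inθ} dθ for n ∈ ℤ. Then for every N ≥ 1, (1/N!) ∫_{[-π,π]^N} ∏_{1≤j<k≤N} |e^{iφ_j} − e^{iφ_k}|² ∏_{j=1}^{N} exp( 2w ( cos φ_j − i v sin φ_j ) ) (dφ_j/2π) = det( (i e^{φ̂_v})^{k−j} ĉ_{j−k} )_{j,k=1}^{N}. -/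
/-!
Expanding `exp (a e^{iθ} + b e^{-iθ})` as a double power series shows that its `n`-th Fourier
coefficient is `∑_{p - q = n} a^p b^q / (p! q!)`, which is multiplied by `λ^n` when `(a, b)` is
replaced by `(λ a, b / λ)`. The weight `exp (2w (cos φ - i v sin φ))` has
`(a, b) = (w (1 - v), w (1 + v))`, and `λ = i e^{φ̂_v}` turns this pair into `(c, c)` with
`c = -i w √(v² - 1)`, the pair of the weight `exp (-2 i w √(v² - 1) cos θ)` defining `ĉ_n`.
On the other side, `∏_{j<k} |e^{iφ_j} - e^{iφ_k}|²` is the product of the Vandermonde determinants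
of the `e^{iφ_j}` and of their conjugates; expanding both over permutations and integrating
coordinatewise gives Heine's identity, the Toeplitz determinant of the Fourier coefficients.
-/

open MeasureTheory Complex Finset Equiv
open scoped Real

noncomputable section

namespace AsymmetricHopping

theorem intervalIntegral_exp_I_int_mul (m : ℤ) :
    ∫ θ in (-π)..π, exp (I * m * θ) = if m = 0 then 2 * (π : ℂ) else 0 := by
  split_ifs with hm
  · simp [hm, two_mul]
  have hIm : I * m ≠ 0 := by simp [hm]
  rw [integral_exp_mul_complex hIm, div_eq_zero_iff, sub_eq_zero]
  left
  have hper : I * m * ((-π : ℝ) : ℂ) = I * m * π + (-m : ℤ) * (2 * π * I) := by push_cast; ring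
  rw [hper, exp_add, exp_int_mul_two_pi_mul_I, mul_one]

def expLaurentCoeff (a b : ℂ) (n : ℤ) : ℂ :=
  ∑' pq : ℕ × ℕ,
    if (pq.1 : ℤ) - pq.2 = n then a ^ pq.1 / pq.1.factorial * (b ^ pq.2 / pq.2.factorial) else 0

theorem expLaurentCoeff_mul_div (a b : ℂ) {l : ℂ} (hl : l ≠ 0) (n : ℤ) :
    expLaurentCoeff (l * a) (b / l) n = l ^ n * expLaurentCoeff a b n := by
  rw [expLaurentCoeff, expLaurentCoeff, ← tsum_mul_left]
  congr 1
  ext ⟨p, q⟩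
  split_ifs with h
  · rw [← h, zpow_sub₀ hl, zpow_natCast, zpow_natCast, mul_pow, div_pow]
    field_simp
  · rw [mul_zero]

theorem exp_add_mul_exp_neg_I_eq_tsum (a b : ℂ) (n : ℤ) (θ : ℝ) :
    exp (a * exp (I * θ) + b * exp (-(I * θ))) * exp (-I * n * θ) =
      ∑' pq : ℕ × ℕ, a ^ pq.1 / pq.1.factorial * (b ^ pq.2 / pq.2.factorial) *
        exp (I * ((pq.1 - pq.2 - n : ℤ) : ℂ) * θ) := by
  have hseries (z : ℂ) : exp z = ∑' k : ℕ, z ^ k / k.factorial := by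
    rw [exp_eq_exp_ℂ, NormedSpace.exp_eq_tsum_div]
  rw [exp_add, hseries (a * _), hseries (b * _), tsum_mul_tsum_of_summable_norm
      (NormedSpace.norm_expSeries_div_summable (a * exp (I * θ)))
      (NormedSpace.norm_expSeries_div_summable (b * exp (-(I * θ)))), ← tsum_mul_right]
  refine tsum_congr fun ⟨p, q⟩ => ?_
  have hexp : exp (I * ((p - q - n : ℤ) : ℂ) * θ) =
      exp (I * θ) ^ p * exp (-(I * θ)) ^ q * exp (-I * n * θ) := by
    rw [← exp_nat_mul, ← exp_nat_mul, ← exp_add, ← exp_add]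
    push_cast
    ring_nf
  rw [hexp]
  ring

theorem intervalIntegral_exp_add_mul_exp_neg_I (a b : ℂ) (n : ℤ) :
    ∫ θ in (-π)..π, exp (a * exp (I * θ) + b * exp (-(I * θ))) * exp (-I * n * θ) =
      2 * π * expLaurentCoeff a b n := by
  set c : ℕ × ℕ → ℂ := fun pq => a ^ pq.1 / pq.1.factorial * (b ^ pq.2 / pq.2.factorial)
  let F : ℕ × ℕ → C(ℝ, ℂ) := fun pq =>
    ⟨fun θ => c pq * exp (I * ((pq.1 - pq.2 - n : ℤ) : ℂ) * θ), by fun_prop⟩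
  have hF : Summable fun pq => ‖(F pq).restrict
      (⟨Set.uIcc (-π) π, isCompact_uIcc⟩ : TopologicalSpace.Compacts ℝ)‖ := by
    refine .of_nonneg_of_le (fun _ => norm_nonneg _) (fun pq => ?_)
      ((NormedSpace.norm_expSeries_div_summable a).mul_norm
        (NormedSpace.norm_expSeries_div_summable b))
    refine (ContinuousMap.norm_le _ (norm_nonneg _)).2 fun θ => ?_
    have hphase : I * ((pq.1 - pq.2 - n : ℤ) : ℂ) * (θ : ℝ) =
        I * ((pq.1 - pq.2 - n : ℤ) * θ : ℝ) := by
      push_cast; ring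
    simp only [ContinuousMap.restrict_apply, ContinuousMap.coe_mk, F, norm_mul, hphase,
      norm_exp_I_mul_ofReal, mul_one, c, le_refl]
  simp_rw [exp_add_mul_exp_neg_I_eq_tsum a b n]
  change ∫ θ in (-π)..π, ∑' pq, F pq θ = _
  rw [← intervalIntegral.tsum_intervalIntegral_eq_of_summable_norm hF, expLaurentCoeff,
    ← tsum_mul_left]
  refine tsum_congr fun ⟨p, q⟩ => ?_
  simp only [ContinuousMap.coe_mk, F, intervalIntegral.integral_const_mul,
    intervalIntegral_exp_I_int_mul, sub_eq_zero]
  split_ifs <;> ring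

theorem intervalIntegral_exp_mul_add_div_mul (a b : ℂ) {l : ℂ} (hl : l ≠ 0) (n : ℤ) :
    ∫ θ in (-π)..π, exp (l * a * exp (I * θ) + b / l * exp (-(I * θ))) * exp (-I * n * θ) =
      l ^ n * ∫ θ in (-π)..π, exp (a * exp (I * θ) + b * exp (-(I * θ))) * exp (-I * n * θ) := by
  rw [intervalIntegral_exp_add_mul_exp_neg_I, intervalIntegral_exp_add_mul_exp_neg_I,
    expLaurentCoeff_mul_div a b hl]
  ring

theorem prod_prod_Ioi_sub_eq_sum_perm {R : Type*} [CommRing R] {n : ℕ} (z : Fin n → R) :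
    ∏ j, ∏ k ∈ Ioi j, (z k - z j) =
      ∑ σ : Perm (Fin n), (Perm.sign σ : R) * ∏ i, z i ^ (σ i : ℕ) := by
  rw [← Matrix.det_vandermonde, ← Matrix.det_transpose, Matrix.det_apply]
  simp [Units.smul_def]

theorem sum_perm_sum_perm_sign_mul_prod {R ι : Type*} [CommRing R] [Fintype ι] [DecidableEq ι]
    (B : Matrix ι ι R) :
    ∑ σ : Perm ι, ∑ τ : Perm ι, (Perm.sign σ : R) * Perm.sign τ * ∏ i, B (σ i) (τ i) =
      (Fintype.card ι).factorial * B.det := by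
  have hcol (τ : Perm ι) :
      ∑ σ : Perm ι, (Perm.sign σ : R) * ∏ i, B (σ i) (τ i) = Perm.sign τ * B.det := by
    rw [← Matrix.det_permute', Matrix.det_apply]
    refine sum_congr rfl fun σ _ => ?_
    rw [Units.smul_def, zsmul_eq_mul]
    rfl
  calc _ = ∑ τ : Perm ι, (Perm.sign τ : R) * (Perm.sign τ * B.det) := by
        rw [sum_comm]
        refine sum_congr rfl fun τ _ => ?_
        rw [← hcol, mul_sum]
        exact sum_congr rfl fun σ _ => by ring
    _ = ∑ _τ : Perm ι, B.det := sum_congr rfl fun τ _ => by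
        rw [← mul_assoc, ← Int.cast_mul, ← Units.val_mul, Int.units_mul_self, Units.val_one,
          Int.cast_one, one_mul]
    _ = _ := by rw [sum_const, card_univ, Fintype.card_perm, nsmul_eq_mul]

theorem setIntegral_univ_pi_prod {ι E : Type*} [Fintype ι] [MeasureSpace E]
    [SigmaFinite (volume : Measure E)] (s : ι → Set E) (g : ι → E → ℂ) :
    ∫ x in Set.univ.pi s, ∏ i, g i (x i) = ∏ i, ∫ t in s i, g i t := by
  rw [volume_pi, Measure.restrict_pi_pi, integral_fintype_prod_eq_prod]

theorem sq_norm_exp_I_sub_exp_I (x y : ℝ) :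
    ((‖exp (I * x) - exp (I * y)‖ : ℝ) : ℂ) ^ 2 =
      (exp (I * y) - exp (I * x)) * (exp (-(I * y)) - exp (-(I * x))) := by
  have hconj (t : ℝ) : (starRingEnd ℂ) (exp (I * t)) = exp (-(I * t)) := by
    rw [← exp_conj, map_mul, conj_I, conj_ofReal, neg_mul]
  rw [← ofReal_pow, Complex.sq_norm, ← mul_conj, map_sub, hconj, hconj]
  ring

theorem exp_I_pow_mul_exp_neg_I_pow (p q : ℕ) (x : ℝ) :
    exp (I * x) ^ p * exp (-(I * x)) ^ q = exp (-I * ((q : ℤ) - (p : ℤ)) * x) := by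
  rw [← exp_nat_mul, ← exp_nat_mul, ← exp_add]
  push_cast
  ring_nf

theorem heine_integrand_eq_sum_perm {N : ℕ} (f : ℝ → ℂ) (φ : Fin N → ℝ) :
    (∏ j : Fin N, ∏ k : Fin N, if j < k then
        ((‖exp (I * φ j) - exp (I * φ k)‖ : ℝ) : ℂ) ^ 2 else 1) *
      (∏ j, f (φ j)) * (1 / (2 * (π : ℂ))) ^ N =
    ∑ σ : Perm (Fin N), ∑ τ : Perm (Fin N), (Perm.sign σ : ℂ) * Perm.sign τ *
      ∏ j, (1 / (2 * (π : ℂ))) * (f (φ j) * exp (-I * ((τ j : ℤ) - (σ j : ℤ)) * φ j)) := by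
  have hvdm : (∏ j : Fin N, ∏ k : Fin N, if j < k then
        ((‖exp (I * φ j) - exp (I * φ k)‖ : ℝ) : ℂ) ^ 2 else 1) =
      (∏ j, ∏ k ∈ Ioi j, (exp (I * φ k) - exp (I * φ j))) *
        ∏ j, ∏ k ∈ Ioi j, (exp (-(I * φ k)) - exp (-(I * φ j))) := by
    rw [← prod_mul_distrib]
    refine prod_congr rfl fun j _ => ?_
    rw [← prod_mul_distrib, ← filter_lt_eq_Ioi, prod_filter]
    simp_rw [sq_norm_exp_I_sub_exp_I]
  rw [hvdm, prod_prod_Ioi_sub_eq_sum_perm, prod_prod_Ioi_sub_eq_sum_perm, sum_mul_sum, sum_mul,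
    sum_mul]
  refine sum_congr rfl fun σ _ => ?_
  rw [sum_mul, sum_mul]
  refine sum_congr rfl fun τ _ => ?_
  simp_rw [prod_mul_distrib, ← exp_I_pow_mul_exp_neg_I_pow, prod_mul_distrib, prod_const,
    card_univ, Fintype.card_fin]
  ring

theorem heine_identity {N : ℕ} {f : ℝ → ℂ} (hf : IntegrableOn f (Set.Icc (-π) π)) :
    (1 / (N.factorial : ℂ)) * ∫ φ : Fin N → ℝ in Set.univ.pi (fun _ => Set.Icc (-π) π),
        ((∏ j : Fin N, ∏ k : Fin N, if j < k then
            ((‖exp (I * φ j) - exp (I * φ k)‖ : ℝ) : ℂ) ^ 2 else 1) *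
          (∏ j, f (φ j)) * (1 / (2 * (π : ℂ))) ^ N) =
      Matrix.det (Matrix.of fun s t : Fin N =>
        (1 / (2 * (π : ℂ))) * ∫ θ in (-π)..π, f θ * exp (-I * ((t : ℤ) - (s : ℤ)) * θ)) := by
  set h : ℕ → ℕ → ℝ → ℂ := fun p q x =>
    (1 / (2 * (π : ℂ))) * (f x * exp (-I * ((q : ℤ) - (p : ℤ)) * x))
  have hint (p q : ℕ) : IntegrableOn (h p q) (Set.Icc (-π) π) :=
    (hf.mul_continuousOn (by fun_prop) isCompact_Icc).const_mul _
  have hentry (p q : ℕ) : ∫ x in Set.Icc (-π) π, h p q x =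
      (1 / (2 * (π : ℂ))) * ∫ θ in (-π)..π, f θ * exp (-I * ((q : ℤ) - (p : ℤ)) * θ) := by
    rw [integral_Icc_eq_integral_Ioc,
      ← intervalIntegral.integral_of_le (by linarith [Real.pi_pos]),
      intervalIntegral.integral_const_mul]
  have hprod (σ τ : Perm (Fin N)) : Integrable (fun φ : Fin N → ℝ => ∏ j, h (σ j) (τ j) (φ j))
      (volume.restrict (Set.univ.pi fun _ => Set.Icc (-π) π)) := by
    rw [volume_pi, Measure.restrict_pi_pi]
    exact Integrable.fintype_prod fun j => hint _ _
  simp_rw [heine_integrand_eq_sum_perm]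
  rw [integral_finsetSum _ fun σ _ => integrable_finsetSum _ fun τ _ => (hprod σ τ).const_mul _]
  simp_rw [integral_finsetSum _ fun τ _ => (hprod _ τ).const_mul _, integral_const_mul,
    setIntegral_univ_pi_prod, hentry]
  have hdet := sum_perm_sum_perm_sign_mul_prod (Matrix.of fun s t : Fin N =>
    (1 / (2 * (π : ℂ))) * ∫ θ in (-π)..π, f θ * exp (-I * ((t : ℤ) - (s : ℤ)) * θ))
  simp only [Matrix.of_apply, Fintype.card_fin] at hdet
  rw [hdet, ← mul_assoc, one_div_mul_cancel (by exact_mod_cast N.factorial_ne_zero), one_mul]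

theorem mul_exp_I_add_mul_exp_neg_I (a b : ℂ) (θ : ℝ) :
    a * exp (I * θ) + b * exp (-(I * θ)) = (a + b) * Real.cos θ + I * (a - b) * Real.sin θ := by
  rw [show -(I * θ) = ((-θ : ℝ) : ℂ) * I by push_cast; ring, mul_comm I, exp_mul_I, exp_mul_I,
    ← ofReal_cos, ← ofReal_sin, ← ofReal_cos, ← ofReal_sin, Real.cos_neg, Real.sin_neg]
  push_cast
  ring

theorem exp_eq_of_cosh_sinh {v φv : ℝ} (hcosh : Real.cosh φv = v / √(v ^ 2 - 1))
    (hsinh : Real.sinh φv = 1 / √(v ^ 2 - 1)) : Real.exp φv = (v + 1) / √(v ^ 2 - 1) := by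
  rw [← Real.cosh_add_sinh, hcosh, hsinh, ← add_div]

theorem I_mul_ofReal_exp_ne_zero (x : ℝ) : I * (Real.exp x : ℂ) ≠ 0 :=
  mul_ne_zero I_ne_zero (ofReal_ne_zero.2 (Real.exp_pos x).ne')

theorem I_mul_exp_mul_eq_and_div_eq (w : ℂ) {v φv : ℝ} (hv : 1 < v)
    (hcosh : Real.cosh φv = v / √(v ^ 2 - 1)) (hsinh : Real.sinh φv = 1 / √(v ^ 2 - 1)) :
    I * (Real.exp φv : ℂ) * (w * (1 - v)) = -I * w * (√(v ^ 2 - 1) : ℝ) ∧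
      w * (1 + v) / (I * (Real.exp φv : ℂ)) = -I * w * (√(v ^ 2 - 1) : ℝ) := by
  have hpos : (0 : ℝ) < v ^ 2 - 1 := by nlinarith
  have hs : ((√(v ^ 2 - 1) : ℝ) : ℂ) ≠ 0 := ofReal_ne_zero.2 (Real.sqrt_pos.2 hpos).ne'
  have hsq : ((√(v ^ 2 - 1) : ℝ) : ℂ) ^ 2 = v ^ 2 - 1 := by
    rw [← ofReal_pow, Real.sq_sqrt hpos.le]; push_cast; ring
  have hv1 : (v : ℂ) + 1 ≠ 0 := by exact_mod_cast (by linarith : v + 1 ≠ 0)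
  rw [exp_eq_of_cosh_sinh hcosh hsinh]
  push_cast
  constructor
  · field_simp
    linear_combination w * hsq
  · field_simp
    linear_combination w * (v + 1) * I_sq

theorem intervalIntegral_exp_cos_mul_eq {w : ℂ} {v φv : ℝ} (hv : 1 < v)
    (hcosh : Real.cosh φv = v / √(v ^ 2 - 1)) (hsinh : Real.sinh φv = 1 / √(v ^ 2 - 1)) (n : ℤ) :
    ∫ θ in (-π)..π, exp (-2 * I * w * (√(v ^ 2 - 1) : ℝ) * Real.cos θ) * exp (-I * n * θ) =
      (I * (Real.exp φv : ℂ)) ^ n * ∫ θ in (-π)..π,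
        exp (2 * w * ((Real.cos θ : ℂ) - I * v * Real.sin θ)) * exp (-I * n * θ) := by
  have hscale := intervalIntegral_exp_mul_add_div_mul (w * (1 - v)) (w * (1 + v))
    (I_mul_ofReal_exp_ne_zero φv) n
  obtain ⟨ha, hb⟩ := I_mul_exp_mul_eq_and_div_eq w hv hcosh hsinh
  rw [ha, hb] at hscale
  simp_rw [mul_exp_I_add_mul_exp_neg_I] at hscale
  convert hscale using 4 <;> ring_nf

end AsymmetricHopping

end

open AsymmetricHopping in
theorem asymmetric_hopping_det_supercritical_general
    (w : ℂ) (v : ℝ) (hv : 1 < v) (φv : ℝ)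
    (hcosh : Real.cosh φv = v / Real.sqrt (v ^ 2 - 1))
    (hsinh : Real.sinh φv = 1 / Real.sqrt (v ^ 2 - 1))
    (N : ℕ) :
    (1 / (N.factorial : ℂ)) *
      ∫ φ : Fin N → ℝ in Set.univ.pi (fun _ => Set.Icc (-Real.pi) Real.pi),
        ((∏ j : Fin N, ∏ k : Fin N, if j < k then
            ((‖Complex.exp (Complex.I * φ j) - Complex.exp (Complex.I * φ k)‖ : ℝ) : ℂ) ^ 2
          else 1) *
          (∏ j : Fin N,
            Complex.exp (2 * w * ((Real.cos (φ j) : ℂ) - Complex.I * v * Real.sin (φ j)))) *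
          (1 / (2 * (Real.pi : ℂ))) ^ N) =
      Matrix.det (Matrix.of fun j k : Fin N =>
        (Complex.I * (Real.exp φv : ℝ)) ^ ((k : ℤ) - (j : ℤ)) *
          ((1 / (2 * (Real.pi : ℂ))) *
            ∫ θ in (-Real.pi)..Real.pi,
              Complex.exp (-2 * Complex.I * w * (Real.sqrt (v ^ 2 - 1) : ℝ) * Real.cos θ) *
                Complex.exp (-Complex.I * ((j : ℤ) - (k : ℤ)) * θ))) := by
  have hweight : IntegrableOn
      (fun θ : ℝ => Complex.exp (2 * w * ((Real.cos θ : ℂ) - Complex.I * v * Real.sin θ)))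
      (Set.Icc (-Real.pi) Real.pi) :=
    (by fun_prop : Continuous _).integrableOn_Icc
  rw [heine_identity hweight, ← Matrix.det_transpose]
  congr 1
  ext j k
  have hentry := intervalIntegral_exp_cos_mul_eq (w := w) hv hcosh hsinh ((j : ℤ) - (k : ℤ))
  rw [Int.cast_sub] at hentry
  rw [Matrix.transpose_apply, Matrix.of_apply, Matrix.of_apply, hentry, mul_left_comm (1 / _),
    ← mul_assoc ((Complex.I * _) ^ _), ← zpow_add₀ (I_mul_ofReal_exp_ne_zero φv),
    sub_add_sub_cancel, sub_self, zpow_zero, one_mul]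

/-- Toeplitz/Bessel determinant representation of the complex-time Loschmidt amplitude for
the XX chain with asymmetric hopping, regime `v > 1`: the matrix integral with weight
`exp(2w(cos φ - iv sin φ))` equals `det((ie^{φ̂_v})^{k-j} ĉ_{j-k})`, where
`ĉ_n = (1/2π)∫ exp(-2iw√(v²-1) cos θ) e^{-inθ} dθ` (i.e. `I_n(-2iw√(v²-1))`) and
`cosh φ̂_v = v/√(v²-1)`, `sinh φ̂_v = 1/√(v²-1)`. -/
theorem asymmetric_hopping_det_supercritical
    (w : ℂ) (v : ℝ) (hv : 1 < v) (φv : ℝ)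
    (hcosh : Real.cosh φv = v / Real.sqrt (v ^ 2 - 1))
    (hsinh : Real.sinh φv = 1 / Real.sqrt (v ^ 2 - 1))
    (N : ℕ) (hN : 1 ≤ N) :
    (1 / (N.factorial : ℂ)) *
      ∫ φ : Fin N → ℝ in Set.univ.pi (fun _ => Set.Icc (-Real.pi) Real.pi),
        ((∏ j : Fin N, ∏ k : Fin N, if j < k then
            ((‖Complex.exp (Complex.I * φ j) - Complex.exp (Complex.I * φ k)‖ : ℝ) : ℂ) ^ 2
          else 1) *
          (∏ j : Fin N,
            Complex.exp (2 * w * ((Real.cos (φ j) : ℂ) - Complex.I * v * Real.sin (φ j)))) *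
          (1 / (2 * (Real.pi : ℂ))) ^ N) =
      Matrix.det (Matrix.of fun j k : Fin N =>
        (Complex.I * (Real.exp φv : ℝ)) ^ ((k : ℤ) - (j : ℤ)) *
          ((1 / (2 * (Real.pi : ℂ))) *
            ∫ θ in (-Real.pi)..Real.pi,
              Complex.exp (-2 * Complex.I * w * (Real.sqrt (v ^ 2 - 1) : ℝ) * Real.cos θ) *
                Complex.exp (-Complex.I * ((j : ℤ) - (k : ℤ)) * θ))) :=
  asymmetric_hopping_det_supercritical_general w v hv φv hcosh hsinh N
end
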